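/- arXiv:1201.1427 — 3 statements merged into one kernel-verified Lean document; each statement's English description precedes it below -/
import Mathlib

section
/- Let λ, μ > 0 and 0 ≤ θ ≤ d. Then E[T], defined as the solution x of x = ∫_{d-θ}^∞ (λ+μ)e^{-(λ+μ)t}(d-θ)dt + ∫₀^{d-θ} (λ+μ)e^{-(λ+μ)t}( (μ/(λ+μ)) t + (λ/(λ+μ))(t+x) ) dt, is given by x = (1 - e^{-(λ+μ)(d-θ)}) / (μ + λ e^{-(λ+μ)(d-θ)}). -/
open Real MeasureTheory

lemma exp_Ioi_int (c a : ℝ) (hc : 0 < c) :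
    (∫ t in Set.Ioi a, c * Real.exp (-c * t)) = Real.exp (-c * a) := by
  have hderiv : ∀ t ∈ Set.Ioi a, HasDerivAt (fun t => -Real.exp (-c * t))
      (c * Real.exp (-c * t)) t := by
    intro t _
    have h := (((hasDerivAt_id t).const_mul (-c)).exp).neg
    simp only [id_eq] at h
    refine h.congr_deriv ?_
    ring
  have hint : IntegrableOn (fun t => c * Real.exp (-c * t)) (Set.Ioi a) :=
    (exp_neg_integrableOn_Ioi a hc).const_mul c
  have htend : Filter.Tendsto (fun t => -Real.exp (-c * t)) Filter.atTop (nhds 0) := by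
    have : Filter.Tendsto (fun t => Real.exp (-c * t)) Filter.atTop (nhds 0) := by
      simpa [mul_comm] using Real.tendsto_exp_comp_nhds_zero.mpr
        (Filter.Tendsto.const_mul_atTop_of_neg (neg_neg_iff_pos.mpr hc) Filter.tendsto_id)
    simpa using this.neg
  have hcont : ContinuousWithinAt (fun t => -Real.exp (-c * t)) (Set.Ici a) a :=
    (Real.continuous_exp.comp (continuous_const.mul continuous_id)).neg.continuousWithinAt
  rw [integral_Ioi_of_hasDerivAt_of_tendsto hcont hderiv hint htend]
  simp

theorem stmt_1 (lam mu d θ : ℝ) (hlam : 0 < lam) (hmu : 0 < mu)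
    (hθ0 : 0 ≤ θ) (hθd : θ ≤ d) (x : ℝ) :
    (x = (∫ t in Set.Ioi (d - θ), (lam + mu) * Real.exp (-(lam + mu) * t) * (d - θ))
          + ∫ t in (0:ℝ)..(d - θ),
              (lam + mu) * Real.exp (-(lam + mu) * t) *
                (mu / (lam + mu) * t + lam / (lam + mu) * (t + x)))
      ↔ x = (1 - Real.exp (-(lam + mu) * (d - θ))) /
              (mu + lam * Real.exp (-(lam + mu) * (d - θ))) := by
  set c := lam + mu with hc
  have hcpos : 0 < c := by positivity
  have hcne : c ≠ 0 := hcpos.ne'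
  set a := d - θ with ha
  set E := Real.exp (-c * a) with hE
  have hEpos : 0 < E := Real.exp_pos _
  -- First integral
  have h1 : (∫ t in Set.Ioi a, c * Real.exp (-c * t) * a) = E * a := by
    rw [MeasureTheory.integral_mul_const, exp_Ioi_int c a hcpos]
  -- Second integral
  have h2 : (∫ t in (0:ℝ)..a,
      c * Real.exp (-c * t) * (mu / c * t + lam / c * (t + x)))
      = (1 + lam * x) / c - E * (a + 1 / c + lam * x / c) := by
    have hderiv : ∀ t ∈ Set.uIcc (0:ℝ) a, HasDerivAt
        (fun t => -Real.exp (-c * t) * (t + (1 / c + lam * x / c)))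
        (c * Real.exp (-c * t) * (mu / c * t + lam / c * (t + x))) t := by
      intro t _
      have h := ((((hasDerivAt_id t).const_mul (-c)).exp).neg).mul
        ((hasDerivAt_id t).add_const (1 / c + lam * x / c))
      simp only [id_eq] at h
      refine h.congr_deriv ?_
      simp only [Pi.neg_apply]
      rw [hc]
      have : lam + mu ≠ 0 := by positivity
      field_simp
      ring
    have hint : IntervalIntegrable
        (fun t => c * Real.exp (-c * t) * (mu / c * t + lam / c * (t + x))) volume 0 a := by
      apply Continuous.intervalIntegrable
      continuity
    rw [intervalIntegral.integral_eq_sub_of_hasDerivAt hderiv hint]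
    simp [hE]
    ring
  rw [h1, h2]
  have hden : 0 < mu + lam * E := by positivity
  have hkey : E * a + ((1 + lam * x) / c - E * (a + 1 / c + lam * x / c))
      = (1 - E) * (1 + lam * x) / c := by
    field_simp
    ring
  rw [hkey]
  constructor
  · intro h
    rw [eq_div_iff hcne, hc] at h
    rw [eq_div_iff hden.ne']
    linear_combination h
  · intro h
    rw [eq_div_iff hden.ne'] at h
    rw [eq_div_iff hcne, hc]
    linear_combination h
end

section
/- Let λ₁, λ₂ ≥ 0, μ > 0, λ = λ₁+λ₂ > 0, and α = 1 - e^{-(λ+μ)d} for some d > 0. The linear system x = α[1/(λ+μ) + (λ₁/(λ+μ))x + (λ₂/(λ+μ))z], y = α[(λ₁/(λ+μ))z + (λ₂/(λ+μ))y], z = α[(λ₁/(λ+μ))x + (λ₂/(λ+μ))y] has a unique solution (x,y,z) = (E[T₁,₁], E[T₁,₂], E[T₁,₃]), and all components are nonnegative. -/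
open Real

/-- The linear system for the expected cumulative type-1 buffer occupation times
`(E[T₁,₁], E[T₁,₂], E[T₁,₃])` in a clearance period of the network-coding router. -/
def T1sys (lam1 lam2 mu α : ℝ) (p : ℝ × ℝ × ℝ) : Prop :=
  p.1 = α * (1 / (lam1 + lam2 + mu) + (lam1 / (lam1 + lam2 + mu)) * p.1
          + (lam2 / (lam1 + lam2 + mu)) * p.2.2)
  ∧ p.2.1 = α * ((lam1 / (lam1 + lam2 + mu)) * p.2.2
          + (lam2 / (lam1 + lam2 + mu)) * p.2.1)
  ∧ p.2.2 = α * ((lam1 / (lam1 + lam2 + mu)) * p.1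
          + (lam2 / (lam1 + lam2 + mu)) * p.2.1)

lemma aux_unique (a b c : ℝ) (ha : 0 ≤ a) (hb : 0 ≤ b) (hc : 0 ≤ c) (hab : a + b < 1) :
    (∃! p : ℝ × ℝ × ℝ,
        p.1 = c + a * p.1 + b * p.2.2 ∧ p.2.1 = a * p.2.2 + b * p.2.1
          ∧ p.2.2 = a * p.1 + b * p.2.1)
      ∧ ∀ p : ℝ × ℝ × ℝ,
          (p.1 = c + a * p.1 + b * p.2.2 ∧ p.2.1 = a * p.2.2 + b * p.2.1
            ∧ p.2.2 = a * p.1 + b * p.2.1) →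
          0 ≤ p.1 ∧ 0 ≤ p.2.1 ∧ 0 ≤ p.2.2 := by
  have ha1 : a < 1 := by linarith
  have hb1 : b < 1 := by linarith
  have habk : a * b ≤ a := by nlinarith
  have hD : 0 < (1 - a - b) * (1 - a * b) :=
    mul_pos (by linarith) (by nlinarith)
  have hDne : (1 - a - b) * (1 - a * b) ≠ 0 := ne_of_gt hD
  set D : ℝ := (1 - a - b) * (1 - a * b) with hDdef
  -- explicit solution
  have hsol : (c * (1 - b - a * b) / D) = c + a * (c * (1 - b - a * b) / D)
        + b * (a * c * (1 - b) / D)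
      ∧ (a ^ 2 * c / D) = a * (a * c * (1 - b) / D) + b * (a ^ 2 * c / D)
      ∧ (a * c * (1 - b) / D) = a * (c * (1 - b - a * b) / D) + b * (a ^ 2 * c / D) := by
    refine ⟨?_, ?_, ?_⟩ <;> (rw [hDdef]; have hn1 : (1 - a - b) ≠ 0 := (by linarith : (0:ℝ) < 1 - a - b).ne'; have hn2 : (1 - a * b) ≠ 0 := (by nlinarith : (0:ℝ) < 1 - a * b).ne'; have hn : (1 - a - b) * (1 - a * b) ≠ 0 := mul_ne_zero hn1 hn2; rw [eq_comm, ← sub_eq_zero]; field_simp; ring)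
  have huniq : ∀ p : ℝ × ℝ × ℝ,
      (p.1 = c + a * p.1 + b * p.2.2 ∧ p.2.1 = a * p.2.2 + b * p.2.1
        ∧ p.2.2 = a * p.1 + b * p.2.1) →
      p = (c * (1 - b - a * b) / D, a ^ 2 * c / D, a * c * (1 - b) / D) := by
    rintro ⟨x, y, z⟩ ⟨e1, e2, e3⟩
    simp only at e1 e2 e3
    have f1 := hsol.1
    have f2 := hsol.2.1
    have f3 := hsol.2.2
    have hw : (z - a * c * (1 - b) / D) * D = 0 := by
      rw [hDdef]
      linear_combination (1 - a) * (1 - b) * e3 - (1 - a) * (1 - b) * f3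
        + a * (1 - b) * e1 - a * (1 - b) * f1 + b * (1 - a) * e2 - b * (1 - a) * f2
    have hz : z = a * c * (1 - b) / D := by
      rcases mul_eq_zero.mp hw with h | h
      · linarith [sub_eq_zero.mp h]
      · exact absurd h (by rw [hDdef] at *; exact hDne)
    have hx : x = c * (1 - b - a * b) / D := by
      have hux : (x - c * (1 - b - a * b) / D) * (1 - a) = 0 := by
        linear_combination e1 - f1 + b * hz
      rcases mul_eq_zero.mp hux with h | h
      · linarith [sub_eq_zero.mp h]
      · linarith
    have hy : y = a ^ 2 * c / D := by
      have huy : (y - a ^ 2 * c / D) * (1 - b) = 0 := by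
        linear_combination e2 - f2 + a * hz
      rcases mul_eq_zero.mp huy with h | h
      · linarith [sub_eq_zero.mp h]
      · linarith
    simp [Prod.ext_iff, hx, hy, hz]
  have hnonneg : 0 ≤ c * (1 - b - a * b) / D ∧ 0 ≤ a ^ 2 * c / D
      ∧ 0 ≤ a * c * (1 - b) / D := by
    refine ⟨?_, ?_, ?_⟩
    · exact div_nonneg (mul_nonneg hc (by nlinarith)) hD.le
    · exact div_nonneg (by positivity) hD.le
    · exact div_nonneg (mul_nonneg (mul_nonneg ha hc) (by linarith)) hD.le
  refine ⟨⟨_, hsol, fun p hp => huniq p hp⟩, fun p hp => ?_⟩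
  rw [huniq p hp]
  exact hnonneg

theorem stmt_11 (lam1 lam2 mu d : ℝ) (h1 : 0 ≤ lam1) (h2 : 0 ≤ lam2) (hmu : 0 < mu)
    (hlam : 0 < lam1 + lam2) (hd : 0 < d)
    (α : ℝ) (hα : α = 1 - Real.exp (-(lam1 + lam2 + mu) * d)) :
    (∃! p : ℝ × ℝ × ℝ, T1sys lam1 lam2 mu α p)
      ∧ ∀ p : ℝ × ℝ × ℝ, T1sys lam1 lam2 mu α p →
          0 ≤ p.1 ∧ 0 ≤ p.2.1 ∧ 0 ≤ p.2.2 := by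
  have hs : 0 < lam1 + lam2 + mu := by linarith
  have hexp1 : Real.exp (-(lam1 + lam2 + mu) * d) < 1 := by
    rw [Real.exp_lt_one_iff]
    nlinarith
  have hexp0 : 0 < Real.exp (-(lam1 + lam2 + mu) * d) := Real.exp_pos _
  have hα0 : 0 < α := by rw [hα]; linarith
  have hα1 : α < 1 := by rw [hα]; linarith
  have ha : 0 ≤ α * lam1 / (lam1 + lam2 + mu) := by positivity
  have hb : 0 ≤ α * lam2 / (lam1 + lam2 + mu) := by positivity
  have hc : 0 ≤ α / (lam1 + lam2 + mu) := by positivity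
  have hab : α * lam1 / (lam1 + lam2 + mu) + α * lam2 / (lam1 + lam2 + mu) < 1 := by
    rw [← add_div, div_lt_one hs]
    nlinarith
  have hequiv : ∀ p : ℝ × ℝ × ℝ, T1sys lam1 lam2 mu α p ↔
      (p.1 = α / (lam1 + lam2 + mu) + (α * lam1 / (lam1 + lam2 + mu)) * p.1
          + (α * lam2 / (lam1 + lam2 + mu)) * p.2.2
        ∧ p.2.1 = (α * lam1 / (lam1 + lam2 + mu)) * p.2.2
          + (α * lam2 / (lam1 + lam2 + mu)) * p.2.1
        ∧ p.2.2 = (α * lam1 / (lam1 + lam2 + mu)) * p.1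
          + (α * lam2 / (lam1 + lam2 + mu)) * p.2.1) := by
    intro p
    unfold T1sys
    constructor <;> rintro ⟨e1, e2, e3⟩ <;>
      exact ⟨by linear_combination e1, by linear_combination e2, by linear_combination e3⟩
  obtain ⟨⟨q, hq, hquniq⟩, hnn⟩ := aux_unique (α * lam1 / (lam1 + lam2 + mu))
    (α * lam2 / (lam1 + lam2 + mu)) (α / (lam1 + lam2 + mu)) ha hb hc hab
  refine ⟨⟨q, (hequiv q).mpr hq, fun p hp => hquniq p ((hequiv p).mp hp)⟩,
    fun p hp => hnn p ((hequiv p).mp hp)⟩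
end

section
/- Under the hypotheses λ₁, λ₂ ≥ 0, μ > 0, λ = λ₁+λ₂ > 0, 0 < α < 1, the unique solution of the system x = α[1/(λ+μ) + (λ₁/(λ+μ))x + (λ₂/(λ+μ))z], y = α[(λ₁/(λ+μ))z + (λ₂/(λ+μ))y], z = α[(λ₁/(λ+μ))x + (λ₂/(λ+μ))y] satisfies x ≥ z ≥ y ≥ 0. -/
open Real

theorem stmt_12 (lam1 lam2 mu α : ℝ) (h1 : 0 ≤ lam1) (h2 : 0 ≤ lam2) (hmu : 0 < mu)
    (hlam : 0 < lam1 + lam2) (hα0 : 0 < α) (hα1 : α < 1)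
    (x y z : ℝ)
    (hx : x = α * (1 / (lam1 + lam2 + mu) + (lam1 / (lam1 + lam2 + mu)) * x
        + (lam2 / (lam1 + lam2 + mu)) * z))
    (hy : y = α * ((lam1 / (lam1 + lam2 + mu)) * z
        + (lam2 / (lam1 + lam2 + mu)) * y))
    (hz : z = α * ((lam1 / (lam1 + lam2 + mu)) * x
        + (lam2 / (lam1 + lam2 + mu)) * y)) :
    x ≥ z ∧ z ≥ y ∧ y ≥ 0 := by
  have hs : 0 < lam1 + lam2 + mu := by linarith
  have hs' : lam1 + lam2 + mu ≠ 0 := ne_of_gt hs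
  field_simp at hx hy hz
  set s : ℝ := lam1 + lam2 + mu with hsdef
  -- discriminant positive
  have hD : 0 < s ^ 2 - α ^ 2 * lam1 * lam2 := by
    have hα2 : α ^ 2 < 1 := by nlinarith
    nlinarith [mul_nonneg h1 h2, sq_nonneg (lam1 - lam2), mul_pos hmu hlam, sq_nonneg mu,
      mul_le_of_le_one_left (mul_nonneg h1 h2) hα2.le]
  have key1 : (x - z) * (s ^ 2 - α ^ 2 * lam1 * lam2) = α * s := by
    linear_combination s * (hx - hz) + α * lam2 * (hz - hy)
  have hxz : 0 < x - z := by
    rcases lt_or_ge 0 (x - z) with h | h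
    · exact h
    · exfalso
      nlinarith [mul_pos hα0 hs]
  have hzy : 0 ≤ z - y := by
    have key2 : (z - y) * s = α * lam1 * (x - z) := by linear_combination hz - hy
    nlinarith [mul_nonneg (mul_nonneg hα0.le h1) hxz.le]
  have hs2 : 0 < s - α * lam2 := by nlinarith
  have hs3 : 0 < s - α * (lam1 + lam2) := by nlinarith
  have hz0 : 0 ≤ z := by
    have keyz : z * s * (s - α * (lam1 + lam2)) = α * lam1 * (x - z) * (s - α * lam2) := by
      linear_combination (s - α * lam2) * hz + α * lam2 * hy
    nlinarith [mul_nonneg (mul_nonneg (mul_nonneg hα0.le h1) hxz.le) hs2.le,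
      mul_pos hs hs3]
  have hy0 : 0 ≤ y := by
    have keyy : y * (s - α * lam2) = α * lam1 * z := by linear_combination hy
    nlinarith [mul_nonneg (mul_nonneg hα0.le h1) hz0]
  exact ⟨by linarith, by linarith, hy0⟩
end
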